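/- arXiv:2505.16486 — 3 statements merged into one kernel-verified Lean document; each statement's English description precedes it below -/
import Mathlib

section
/- Second-order stochastic dominance is equivalent to pointwise comparison of Lorenz functions: for integrable random variables V and Z, V ≽₍₂₎ Z (i.e., F_V^{(2)}(η) ≤ F_Z^{(2)}(η) for all η) if and only if L_V(p) ≥ L_Z(p) for all p ∈ [0,1]. -/
open MeasureTheory

/-- The cumulative distribution function of `Z` under `μ`. -/
noncomputable def cdfRV {Ω : Type*} [MeasurableSpace Ω] (μ : Measure Ω)
    (Z : Ω → ℝ) (η : ℝ) : ℝ := (μ {ω | Z ω ≤ η}).toReal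

/-- The left-continuous quantile function `F_Z^{-1}(p) = inf {η | F_Z(η) ≥ p}`. -/
noncomputable def quantileRV {Ω : Type*} [MeasurableSpace Ω] (μ : Measure Ω)
    (Z : Ω → ℝ) (p : ℝ) : ℝ := sInf {η : ℝ | p ≤ cdfRV μ Z η}

/-- The absolute Lorenz function `L_Z(p) = ∫_0^p F_Z^{-1}(t) dt`. -/
noncomputable def lorenzRV {Ω : Type*} [MeasurableSpace Ω] (μ : Measure Ω)
    (Z : Ω → ℝ) (p : ℝ) : ℝ := ∫ t in (0:ℝ)..p, quantileRV μ Z t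

open Set Filter ProbabilityTheory
open scoped Topology ENNReal

set_option linter.unusedSectionVars false
set_option linter.unusedVariables false

namespace SSDAux


variable (ν : Measure ℝ) [IsProbabilityMeasure ν]

/-- quantile function of a measure on ℝ -/
noncomputable def Q (p : ℝ) : ℝ := sInf {η : ℝ | p ≤ cdf ν η}

variable {ν}

lemma nonempty_Qset {p : ℝ} (hp : p < 1) : {η : ℝ | p ≤ cdf ν η}.Nonempty := by
  have h : ∀ᶠ x in atTop, p < cdf ν x := (tendsto_cdf_atTop ν).eventually_const_lt hp
  obtain ⟨x, hx⟩ := h.exists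
  exact ⟨x, hx.le⟩

lemma bddBelow_Qset {p : ℝ} (hp : 0 < p) : BddBelow {η : ℝ | p ≤ cdf ν η} := by
  have h : ∀ᶠ x in atBot, cdf ν x < p := (tendsto_cdf_atBot ν).eventually_lt_const hp
  obtain ⟨x, hx⟩ := h.exists
  refine ⟨x, fun s hs => ?_⟩
  by_contra hc
  exact absurd (le_trans hs ((monotone_cdf ν) (le_of_not_ge hc))) (not_le.2 hx)

lemma Q_le {p x : ℝ} (hp : 0 < p) (h : p ≤ cdf ν x) : Q ν p ≤ x :=
  csInf_le (bddBelow_Qset hp) h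

lemma le_cdf_Q {p : ℝ} (hp : 0 < p) (hp1 : p < 1) : p ≤ cdf ν (Q ν p) := by
  have hne := nonempty_Qset (ν := ν) hp1
  have h1 : ∀ x, Q ν p < x → p ≤ cdf ν x := by
    intro x hx
    obtain ⟨s, hs, hsx⟩ := exists_lt_of_csInf_lt hne hx
    exact le_trans hs ((monotone_cdf ν) hsx.le)
  have h2 : Tendsto (cdf ν) (𝓝[>] (Q ν p)) (𝓝 (cdf ν (Q ν p))) :=
    ((cdf ν).right_continuous (Q ν p)).tendsto.mono_left
      (nhdsWithin_mono _ (Ioi_subset_Ici le_rfl))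
  refine ge_of_tendsto h2 ?_
  filter_upwards [self_mem_nhdsWithin] with x hx using h1 x hx

lemma le_Q {p x : ℝ} (hp1 : p < 1) (h : cdf ν x < p) : x ≤ Q ν p := by
  refine le_csInf (nonempty_Qset hp1) fun s hs => ?_
  by_contra hc
  exact absurd (le_trans hs ((monotone_cdf ν) (le_of_not_ge hc))) (not_le.2 h)

lemma Q_mono {p p' : ℝ} (hp : 0 < p) (hp' : p' < 1) (h : p ≤ p') : Q ν p ≤ Q ν p' :=
  csInf_le_csInf (bddBelow_Qset hp) (nonempty_Qset hp')
    (fun s hs => le_trans h hs)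

lemma Q_le_iff {p x : ℝ} (hp : 0 < p) (hp1 : p < 1) : Q ν p ≤ x ↔ p ≤ cdf ν x :=
  ⟨fun h => le_trans (le_cdf_Q hp hp1) ((monotone_cdf ν) h), fun h => Q_le hp h⟩


variable (ν) in
noncomputable def Qi : ℝ → ℝ := (Ioo (0:ℝ) 1).indicator (Q ν)

lemma Qi_preimage_Iic (x : ℝ) :
    Qi ν ⁻¹' (Iic x) = (Ioo 0 1 ∩ Iic (cdf ν x)) ∪ ((Ioo (0:ℝ) 1)ᶜ ∩ {t : ℝ | (0:ℝ) ≤ x}) := by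
  ext t
  by_cases ht : t ∈ Ioo (0:ℝ) 1
  · simp only [mem_preimage, mem_Iic, Qi, Set.indicator_of_mem ht, mem_union, mem_inter_iff,
      ht, true_and, mem_compl_iff, not_true_eq_false, false_and, or_false, mem_setOf_eq]
    exact Q_le_iff ht.1 ht.2
  · simp [Qi, Set.indicator_of_notMem ht, ht]

lemma measurable_Qi : Measurable (Qi ν) := by
  refine measurable_of_Iic fun x => ?_
  rw [Qi_preimage_Iic]
  by_cases hx : (0:ℝ) ≤ x
  · simp only [hx, setOf_true, inter_univ]
    exact (measurableSet_Ioo.inter measurableSet_Iic).union measurableSet_Ioo.compl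
  · simp only [hx, setOf_false, inter_empty, union_empty]
    exact measurableSet_Ioo.inter measurableSet_Iic

instance : IsProbabilityMeasure (volume.restrict (Ioo (0:ℝ) 1)) :=
  ⟨by rw [Measure.restrict_apply_univ, Real.volume_Ioo]; norm_num⟩

lemma map_Qi : (volume.restrict (Ioo (0:ℝ) 1)).map (Qi ν) = ν := by
  have hQm : Measurable (Qi ν) := measurable_Qi
  have : IsProbabilityMeasure ((volume.restrict (Ioo (0:ℝ) 1)).map (Qi ν)) :=
    Measure.isProbabilityMeasure_map hQm.aemeasurable
  refine Measure.ext_of_Iic _ _ (fun x => ?_)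
  rw [Measure.map_apply hQm measurableSet_Iic,
    Measure.restrict_apply (hQm measurableSet_Iic), Qi_preimage_Iic, union_inter_distrib_right]
  have h2 : ((Ioo (0:ℝ) 1)ᶜ ∩ {t : ℝ | (0:ℝ) ≤ x}) ∩ Ioo 0 1 = ∅ := by
    ext t; simp only [mem_inter_iff, mem_compl_iff, mem_empty_iff_false, iff_false]
    tauto
  rw [h2, union_empty, inter_assoc, inter_comm (Iic _) (Ioo _ _), ← inter_assoc, inter_self, ← ofReal_cdf ν x]
  have h0 : (0:ℝ) ≤ cdf ν x := cdf_nonneg ν x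
  rcases lt_or_ge (cdf ν x) 1 with h1 | h1
  · have : Ioo (0:ℝ) 1 ∩ Iic (cdf ν x) = Ioc 0 (cdf ν x) := by
      ext t
      simp only [mem_inter_iff, mem_Ioo, mem_Iic, mem_Ioc]
      constructor
      · rintro ⟨⟨h, _⟩, h'⟩; exact ⟨h, h'⟩
      · rintro ⟨h, h'⟩; exact ⟨⟨h, lt_of_le_of_lt h' h1⟩, h'⟩
    rw [this, Real.volume_Ioc, sub_zero]
  · have h1' : cdf ν x = 1 := le_antisymm (cdf_le_one ν x) h1
    have : Ioo (0:ℝ) 1 ∩ Iic (cdf ν x) = Ioo 0 1 := by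
      rw [h1']
      exact inter_eq_left.2 fun t ht => le_of_lt ht.2
    rw [this, Real.volume_Ioo, h1']
    norm_num


lemma Qi_ae_eq : Qi ν =ᵐ[volume.restrict (Ioo (0:ℝ) 1)] Q ν := by
  filter_upwards [ae_restrict_mem measurableSet_Ioo] with t ht
  simp only [Qi]
  rw [Set.indicator_of_mem ht]

lemma aemeasurable_Q : AEMeasurable (Q ν) (volume.restrict (Ioo (0:ℝ) 1)) :=
  measurable_Qi.aemeasurable.congr Qi_ae_eq

lemma integrableOn_Q (hint : Integrable id ν) : IntegrableOn (Q ν) (Ioo (0:ℝ) 1) volume := by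
  have h1 : Integrable (Qi ν) (volume.restrict (Ioo (0:ℝ) 1)) := by
    have := hint
    rw [← map_Qi (ν := ν),
      integrable_map_measure aestronglyMeasurable_id measurable_Qi.aemeasurable] at this
    exact this
  exact h1.congr Qi_ae_eq

lemma lintegral_cdf_Iic (η : ℝ) :
    ∫⁻ t in Iic η, ENNReal.ofReal (cdf ν t) = ∫⁻ x, ENNReal.ofReal (η - x) ∂ν := by
  have hS : MeasurableSet {p : ℝ × ℝ | p.2 ≤ p.1} := measurableSet_le measurable_snd measurable_fst
  have hmeas : Measurable fun p : ℝ × ℝ => {p : ℝ × ℝ | p.2 ≤ p.1}.indicator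
      (fun _ => (1:ℝ≥0∞)) p := measurable_const.indicator hS
  calc ∫⁻ t in Iic η, ENNReal.ofReal (cdf ν t)
      = ∫⁻ t in Iic η, ν (Iic t) := by simp_rw [ofReal_cdf]
    _ = ∫⁻ t in Iic η, ∫⁻ x, {p : ℝ × ℝ | p.2 ≤ p.1}.indicator (fun _ => (1:ℝ≥0∞)) (t, x) ∂ν := by
        refine lintegral_congr fun t => ?_
        have h0 : ∫⁻ x, (Iic t).indicator (fun _ => (1:ℝ≥0∞)) x ∂ν = ν (Iic t) := by
          rw [lintegral_indicator_const measurableSet_Iic, one_mul]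
        rw [← h0]
        refine lintegral_congr fun x => ?_
        by_cases h : x ≤ t <;> simp [Set.indicator_apply, h]
    _ = ∫⁻ x, ∫⁻ t in Iic η, {p : ℝ × ℝ | p.2 ≤ p.1}.indicator (fun _ => (1:ℝ≥0∞)) (t, x) ∂volume ∂ν :=
        lintegral_lintegral_swap hmeas.aemeasurable
    _ = ∫⁻ x, ENNReal.ofReal (η - x) ∂ν := by
        refine lintegral_congr fun x => ?_
        have h1 : ∀ t : ℝ, {p : ℝ × ℝ | p.2 ≤ p.1}.indicator (fun _ => (1:ℝ≥0∞)) (t, x)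
            = (Ici x).indicator (fun _ => (1:ℝ≥0∞)) t := by
          intro t
          by_cases h : x ≤ t <;> simp [Set.indicator_apply, h]
        simp_rw [h1]
        rw [lintegral_indicator_const (measurableSet_Ici : MeasurableSet (Ici x)) (1:ℝ≥0∞),
          one_mul, Measure.restrict_apply measurableSet_Ici, Ici_inter_Iic, Real.volume_Icc]

lemma lint_lt_top (hint : Integrable id ν) (η : ℝ) :
    ∫⁻ x, ENNReal.ofReal (η - x) ∂ν < ⊤ := by
  have h : Integrable (fun x => |η| + |x|) ν := (integrable_const _).add hint.abs
  refine lt_of_le_of_lt (lintegral_mono fun x => ENNReal.ofReal_le_ofReal ?_) h.lintegral_lt_top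
  have := le_abs_self η
  have := neg_le_abs x
  linarith

lemma lintegral_quantile (η : ℝ) :
    ∫⁻ x, ENNReal.ofReal (η - x) ∂ν
      = ∫⁻ s in Ioo (0:ℝ) 1, ENNReal.ofReal (η - Q ν s) := by
  conv_lhs => rw [← map_Qi (ν := ν)]
  rw [lintegral_map (f := fun x : ℝ => ENNReal.ofReal (η - x))
    ((measurable_const.sub measurable_id).ennreal_ofReal) (measurable_Qi (ν := ν))]
  refine lintegral_congr_ae ?_
  filter_upwards [Qi_ae_eq (ν := ν)] with t ht
  rw [ht]

lemma integrableOn_cdf (hint : Integrable id ν) (η : ℝ) :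
    IntegrableOn (cdf ν) (Iic η) volume := by
  refine ⟨((monotone_cdf ν).measurable).aestronglyMeasurable, ?_⟩
  rw [hasFiniteIntegral_iff_ofReal (ae_of_all _ fun t => cdf_nonneg ν t)]
  rw [lintegral_cdf_Iic]
  exact lint_lt_top hint η

lemma integrableOn_max (hint : Integrable id ν) (η : ℝ) :
    IntegrableOn (fun s => max (η - Q ν s) 0) (Ioo (0:ℝ) 1) volume := by
  have h : Integrable (fun s => η - Q ν s) (volume.restrict (Ioo (0:ℝ) 1)) :=
    (integrable_const η).sub (integrableOn_Q hint)
  exact h.pos_part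

lemma F2_eq (hint : Integrable id ν) (η : ℝ) :
    ∫ t in Iic η, cdf ν t = ∫ s in Ioo (0:ℝ) 1, max (η - Q ν s) 0 := by
  have h1 : ∫ t in Iic η, cdf ν t
      = (∫⁻ t in Iic η, ENNReal.ofReal (cdf ν t)).toReal :=
    integral_eq_lintegral_of_nonneg_ae (ae_of_all _ fun t => cdf_nonneg ν t)
      ((monotone_cdf ν).measurable).aestronglyMeasurable
  have h2 : ∫ s in Ioo (0:ℝ) 1, max (η - Q ν s) 0
      = (∫⁻ s in Ioo (0:ℝ) 1, ENNReal.ofReal (max (η - Q ν s) 0)).toReal :=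
    integral_eq_lintegral_of_nonneg_ae (ae_of_all _ fun s => le_max_right _ _)
      (((aemeasurable_const.sub aemeasurable_Q).max aemeasurable_const).aestronglyMeasurable)
  rw [h1, h2]
  congr 1
  rw [lintegral_cdf_Iic, lintegral_quantile]
  refine lintegral_congr fun s => ?_
  rcases le_total (η - Q ν s) 0 with h | h
  · rw [max_eq_right h, ENNReal.ofReal_eq_zero.2 h, ENNReal.ofReal_zero]
  · rw [max_eq_left h]





lemma integral_const_Ioo {p c : ℝ} (hp : 0 ≤ p) :
    ∫ _ in Ioo (0:ℝ) p, c = p * c := by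
  rw [setIntegral_const, Real.volume_real_Ioo, sub_zero, max_eq_left hp, smul_eq_mul]

/-- Young's inequality: `p * η ≤ L(p) + F²(η)`. -/
lemma young (hint : Integrable id ν) {p : ℝ} (hp : p ∈ Icc (0:ℝ) 1) (η : ℝ) :
    p * η ≤ (∫ t in Ioo (0:ℝ) p, Q ν t) + ∫ t in Iic η, cdf ν t := by
  rw [F2_eq hint]
  have hsub : Ioo (0:ℝ) p ⊆ Ioo (0:ℝ) 1 := Ioo_subset_Ioo le_rfl hp.2
  have hQp : IntegrableOn (Q ν) (Ioo (0:ℝ) p) volume := (integrableOn_Q hint).mono_set hsub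
  have hmax1 := integrableOn_max hint η
  have hmaxp : IntegrableOn (fun s => max (η - Q ν s) 0) (Ioo (0:ℝ) p) volume :=
    hmax1.mono_set hsub
  have step1 : ∫ t in Ioo (0:ℝ) p, max (η - Q ν t) 0
      ≤ ∫ t in Ioo (0:ℝ) 1, max (η - Q ν t) 0 :=
    setIntegral_mono_set hmax1 (ae_of_all _ fun t => le_max_right _ _)
      (HasSubset.Subset.eventuallyLE hsub)
  have step2 : ∫ t in Ioo (0:ℝ) p, (η - Q ν t)
      ≤ ∫ t in Ioo (0:ℝ) p, max (η - Q ν t) 0 :=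
    integral_mono ((integrable_const η).sub hQp) hmaxp fun t => le_max_left _ _
  have step3 : ∫ t in Ioo (0:ℝ) p, (η - Q ν t)
      = p * η - ∫ t in Ioo (0:ℝ) p, Q ν t := by
    rw [integral_sub (integrable_const η) hQp, integral_const_Ioo hp.1]
  linarith

/-- Exact conjugacy at `p₀ = F(η)`. -/
lemma F2_attain (hint : Integrable id ν) (η : ℝ) :
    ∫ t in Iic η, cdf ν t
      = cdf ν η * η - ∫ t in Ioo (0:ℝ) (cdf ν η), Q ν t := by
  set p₀ : ℝ := cdf ν η with hp₀
  have hp₀0 : 0 ≤ p₀ := cdf_nonneg ν η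
  have hp₀1 : p₀ ≤ 1 := cdf_le_one ν η
  have hsub : Ioo (0:ℝ) p₀ ⊆ Ioo (0:ℝ) 1 := Ioo_subset_Ioo le_rfl hp₀1
  have hQp : IntegrableOn (Q ν) (Ioo (0:ℝ) p₀) volume := (integrableOn_Q hint).mono_set hsub
  have hne : ∀ᵐ (t : ℝ) ∂(volume.restrict (Ioo (0:ℝ) 1)), t ≠ p₀ := by
    refine ae_restrict_of_ae ?_
    rw [ae_iff]
    have : {t : ℝ | ¬ t ≠ p₀} = {p₀} := by ext t; simp [not_not]
    rw [this]
    exact measure_singleton p₀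
  have hae : ∀ᵐ t ∂(volume.restrict (Ioo (0:ℝ) 1)),
      max (η - Q ν t) 0 = (Ioo (0:ℝ) p₀).indicator (fun t => η - Q ν t) t := by
    filter_upwards [ae_restrict_mem measurableSet_Ioo, hne] with t ht htne
    rcases lt_or_gt_of_ne htne with hlt | hgt
    · have hQle : Q ν t ≤ η := Q_le ht.1 (hp₀ ▸ hlt.le)
      rw [max_eq_left (sub_nonneg.2 hQle), Set.indicator_of_mem (Set.mem_Ioo.2 ⟨ht.1, hlt⟩)]
    · have hηle : η ≤ Q ν t := le_Q ht.2 (hp₀ ▸ hgt)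
      rw [max_eq_right (sub_nonpos.2 hηle), Set.indicator_of_notMem (fun hc => absurd (Set.mem_Ioo.1 hc).2 (not_lt.2 hgt.le))]
  rw [F2_eq hint, integral_congr_ae hae, setIntegral_indicator measurableSet_Ioo,
    inter_eq_self_of_subset_right hsub,
    integral_sub (integrable_const η) hQp, integral_const_Ioo hp₀0]

/-- Exact conjugacy at `η = Q(p)` for `p ∈ (0,1)`. -/
lemma L_attain (hint : Integrable id ν) {p : ℝ} (hp : 0 < p) (hp1 : p < 1) :
    ∫ t in Ioo (0:ℝ) p, Q ν t
      = p * Q ν p - ∫ t in Iic (Q ν p), cdf ν t := by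
  have hsub : Ioo (0:ℝ) p ⊆ Ioo (0:ℝ) 1 := Ioo_subset_Ioo le_rfl hp1.le
  have hQp : IntegrableOn (Q ν) (Ioo (0:ℝ) p) volume := (integrableOn_Q hint).mono_set hsub
  have hne : ∀ᵐ (t : ℝ) ∂(volume.restrict (Ioo (0:ℝ) 1)), t ≠ p := by
    refine ae_restrict_of_ae ?_
    rw [ae_iff]
    have : {t : ℝ | ¬ t ≠ p} = {p} := by ext t; simp [not_not]
    rw [this]
    exact measure_singleton p
  have hae : ∀ᵐ t ∂(volume.restrict (Ioo (0:ℝ) 1)),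
      max (Q ν p - Q ν t) 0 = (Ioo (0:ℝ) p).indicator (fun t => Q ν p - Q ν t) t := by
    filter_upwards [ae_restrict_mem measurableSet_Ioo, hne] with t ht htne
    rcases lt_or_gt_of_ne htne with hlt | hgt
    · have : Q ν t ≤ Q ν p := Q_mono ht.1 hp1 hlt.le
      rw [max_eq_left (sub_nonneg.2 this), Set.indicator_of_mem (Set.mem_Ioo.2 ⟨ht.1, hlt⟩)]
    · have : Q ν p ≤ Q ν t := Q_mono hp ht.2 hgt.le
      rw [max_eq_right (sub_nonpos.2 this), Set.indicator_of_notMem (fun hc => absurd (Set.mem_Ioo.1 hc).2 (not_lt.2 hgt.le))]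
  rw [F2_eq hint, integral_congr_ae hae, setIntegral_indicator measurableSet_Ioo,
    inter_eq_self_of_subset_right hsub,
    integral_sub (integrable_const _) hQp, integral_const_Ioo hp.le]
  ring

lemma continuousOn_L (hint : Integrable id ν) :
    ContinuousOn (fun p => ∫ t in Ioo (0:ℝ) p, Q ν t) (Icc (0:ℝ) 1) := by
  have hI : IntegrableOn (Q ν) (Icc (0:ℝ) 1) volume :=
    (integrableOn_Icc_iff_integrableOn_Ioo).2 (integrableOn_Q hint)
  have h := intervalIntegral.continuousOn_primitive (f := Q ν) (a := (0:ℝ)) (b := 1) hI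
  refine h.congr fun x hx => ?_
  exact (integral_Ioc_eq_integral_Ioo).symm

end SSDAux

/-- Second-order stochastic dominance (comparison of integrated CDFs) is
equivalent to pointwise comparison of Lorenz functions on `[0,1]`. -/
theorem ssd_iff_lorenz
    {Ω : Type*} [MeasurableSpace Ω] (μ : Measure Ω) [IsProbabilityMeasure μ]
    (V Z : Ω → ℝ) (hVm : Measurable V) (hZm : Measurable Z)
    (hV : Integrable V μ) (hZ : Integrable Z μ) :
    (∀ η : ℝ, ∫ t in Set.Iic η, cdfRV μ V t ≤ ∫ t in Set.Iic η, cdfRV μ Z t) ↔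
    (∀ p ∈ Set.Icc (0:ℝ) 1, lorenzRV μ Z p ≤ lorenzRV μ V p) := by
  classical
  set νV := μ.map V with hνV
  set νZ := μ.map Z with hνZ
  haveI : IsProbabilityMeasure νV := Measure.isProbabilityMeasure_map hVm.aemeasurable
  haveI : IsProbabilityMeasure νZ := Measure.isProbabilityMeasure_map hZm.aemeasurable
  have hcdfV : ∀ t, cdfRV μ V t = cdf νV t := by
    intro t
    rw [cdfRV, ProbabilityTheory.cdf_eq_real, measureReal_def, hνV, Measure.map_apply hVm measurableSet_Iic]
    rfl
  have hcdfZ : ∀ t, cdfRV μ Z t = cdf νZ t := by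
    intro t
    rw [cdfRV, ProbabilityTheory.cdf_eq_real, measureReal_def, hνZ, Measure.map_apply hZm measurableSet_Iic]
    rfl
  have hintV : Integrable id νV :=
    (integrable_map_measure aestronglyMeasurable_id hVm.aemeasurable).2 hV
  have hintZ : Integrable id νZ :=
    (integrable_map_measure aestronglyMeasurable_id hZm.aemeasurable).2 hZ
  have hqV : quantileRV μ V = SSDAux.Q νV := by
    funext p
    rw [quantileRV, SSDAux.Q]
    congr 1
    ext η
    simp only [mem_setOf_eq, hcdfV]
  have hqZ : quantileRV μ Z = SSDAux.Q νZ := by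
    funext p
    rw [quantileRV, SSDAux.Q]
    congr 1
    ext η
    simp only [mem_setOf_eq, hcdfZ]
  have hlorV : ∀ p : ℝ, 0 ≤ p → lorenzRV μ V p = ∫ t in Ioo (0:ℝ) p, SSDAux.Q νV t := by
    intro p hp
    rw [lorenzRV, hqV, intervalIntegral.integral_of_le hp, integral_Ioc_eq_integral_Ioo]
  have hlorZ : ∀ p : ℝ, 0 ≤ p → lorenzRV μ Z p = ∫ t in Ioo (0:ℝ) p, SSDAux.Q νZ t := by
    intro p hp
    rw [lorenzRV, hqZ, intervalIntegral.integral_of_le hp, integral_Ioc_eq_integral_Ioo]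
  have hF2V : ∀ η : ℝ, ∫ t in Iic η, cdfRV μ V t = ∫ t in Iic η, cdf νV t := by
    intro η
    simp_rw [hcdfV]
  have hF2Z : ∀ η : ℝ, ∫ t in Iic η, cdfRV μ Z t = ∫ t in Iic η, cdf νZ t := by
    intro η
    simp_rw [hcdfZ]
  constructor
  · intro h
    have core : ∀ p : ℝ, 0 < p → p < 1 → lorenzRV μ Z p ≤ lorenzRV μ V p := by
      intro p hp0 hp1
      rw [hlorZ p hp0.le, hlorV p hp0.le]
      set η := SSDAux.Q νZ p with hη
      have h1 : ∫ t in Ioo (0:ℝ) p, SSDAux.Q νZ t = p * η - ∫ t in Iic η, cdf νZ t :=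
        SSDAux.L_attain hintZ hp0 hp1
      have h2 : p * η ≤ (∫ t in Ioo (0:ℝ) p, SSDAux.Q νV t) + ∫ t in Iic η, cdf νV t :=
        SSDAux.young hintV ⟨hp0.le, hp1.le⟩ η
      have h3 := h η
      rw [hF2V η, hF2Z η] at h3
      linarith
    intro p hp
    rcases eq_or_lt_of_le hp.1 with h0 | h0
    · rw [lorenzRV, lorenzRV, ← h0, intervalIntegral.integral_same, intervalIntegral.integral_same]
    rcases eq_or_lt_of_le hp.2 with h1 | h1
    swap
    · exact core p h0 h1
    · subst h1
      have hcZ : ContinuousOn (lorenzRV μ Z) (Icc (0:ℝ) 1) :=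
        (SSDAux.continuousOn_L hintZ).congr fun x hx => hlorZ x hx.1
      have hcV : ContinuousOn (lorenzRV μ V) (Icc (0:ℝ) 1) :=
        (SSDAux.continuousOn_L hintV).congr fun x hx => hlorV x hx.1
      have h1mem : (1:ℝ) ∈ Icc (0:ℝ) 1 := ⟨zero_le_one, le_rfl⟩
      haveI hne : (𝓝[Ioo (0:ℝ) 1] (1:ℝ)).NeBot := by
        refine mem_closure_iff_nhdsWithin_neBot.1 ?_
        rw [closure_Ioo (by norm_num : (0:ℝ) ≠ 1)]
        exact h1mem
      have htZ : Tendsto (lorenzRV μ Z) (𝓝[Ioo (0:ℝ) 1] 1) (𝓝 (lorenzRV μ Z 1)) :=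
        (hcZ 1 h1mem).mono_left (nhdsWithin_mono _ Ioo_subset_Icc_self)
      have htV : Tendsto (lorenzRV μ V) (𝓝[Ioo (0:ℝ) 1] 1) (𝓝 (lorenzRV μ V 1)) :=
        (hcV 1 h1mem).mono_left (nhdsWithin_mono _ Ioo_subset_Icc_self)
      refine le_of_tendsto_of_tendsto htZ htV ?_
      filter_upwards [self_mem_nhdsWithin] with q hq
      exact core q hq.1 hq.2
  · intro h η
    rw [hF2V η, hF2Z η]
    set p₀ := cdf νV η with hp₀def
    have hp₀ : p₀ ∈ Icc (0:ℝ) 1 := ⟨cdf_nonneg _ _, cdf_le_one _ _⟩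
    have h4 : ∫ t in Iic η, cdf νV t = p₀ * η - ∫ t in Ioo (0:ℝ) p₀, SSDAux.Q νV t :=
      SSDAux.F2_attain hintV η
    have h5 := h p₀ hp₀
    rw [hlorZ p₀ hp₀.1, hlorV p₀ hp₀.1] at h5
    have h6 : p₀ * η ≤ (∫ t in Ioo (0:ℝ) p₀, SSDAux.Q νZ t) + ∫ t in Iic η, cdf νZ t :=
      SSDAux.young hintZ hp₀ η
    linarith
end

section
/- For an integrable random variable Z, the functions F_Z^{(2)} and the extended Lorenz function L_Z are Fenchel conjugates: F_Z^{(2)}(η) = sup_{p∈[0,1]} (pη − L_Z(p)) for all η ∈ ℝ. -/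
open MeasureTheory

open Set Filter ProbabilityTheory in
/-- Fenchel conjugacy: `F_Z^{(2)}(η) = E[(η−Z)₊] = sup_{p∈[0,1]} (pη − L_Z(p))`. -/
theorem integratedCDF_eq_conjugate_lorenz
    {Ω : Type*} [MeasurableSpace Ω] (μ : Measure Ω) [IsProbabilityMeasure μ]
    (Z : Ω → ℝ) (hZm : Measurable Z) (hZ : Integrable Z μ) :
    ∀ η : ℝ,
      ∫ ω, max (η - Z ω) 0 ∂μ =
        sSup ((fun p => p * η - lorenzRV μ Z p) '' Set.Icc (0:ℝ) 1) := by
  intro η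
  set ν : Measure ℝ := μ.map Z with hν
  have hprob : IsProbabilityMeasure ν := Measure.isProbabilityMeasure_map hZm.aemeasurable
  set F : StieltjesFunction ℝ := cdf ν with hF
  set q : ℝ → ℝ := quantileRV μ Z with hqdef
  have hcdf : ∀ x, cdfRV μ Z x = F x := by
    intro x
    rw [cdfRV, hF, cdf_eq_real, Measure.real, hν, Measure.map_apply hZm measurableSet_Iic]
    rfl
  have hq_eq : ∀ t, q t = sInf {x | t ≤ F x} := by
    intro t
    rw [hqdef, quantileRV]
    congr 1
    ext x
    simp only [Set.mem_setOf_eq, hcdf]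
  have hne : ∀ t : ℝ, t < 1 → {x | t ≤ F x}.Nonempty := by
    intro t ht
    obtain ⟨x, hx⟩ := ((tendsto_cdf_atTop ν).eventually (eventually_gt_nhds ht)).exists
    exact ⟨x, hx.le⟩
  have hbdd : ∀ t : ℝ, 0 < t → BddBelow {x | t ≤ F x} := by
    intro t ht
    obtain ⟨a, ha⟩ := eventually_atBot.1 ((tendsto_cdf_atBot ν).eventually (eventually_lt_nhds ht))
    exact ⟨a, fun y hy => not_lt.1 fun hlt => (ha y hlt.le).not_ge hy⟩
  have hq_iff : ∀ t x : ℝ, 0 < t → t < 1 → (q t ≤ x ↔ t ≤ F x) := by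
    intro t x ht0 ht1
    rw [hq_eq]
    constructor
    · intro h
      have hmem : ∀ y, sInf {x | t ≤ F x} < y → t ≤ F y := by
        intro y hy
        obtain ⟨s, hs, hsy⟩ := exists_lt_of_csInf_lt (hne t ht1) hy
        exact le_trans hs (F.mono hsy.le)
      have h2 : Tendsto F (nhdsWithin (sInf {x | t ≤ F x}) (Ioi (sInf {x | t ≤ F x})))
          (nhds (F (sInf {x | t ≤ F x}))) :=
        (F.right_continuous (sInf {x | t ≤ F x})).tendsto.mono_left
          (nhdsWithin_mono _ Ioi_subset_Ici_self)
      have h3 : t ≤ F (sInf {x | t ≤ F x}) :=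
        ge_of_tendsto h2 (eventually_nhdsWithin_of_forall (fun y hy => hmem y hy))
      exact h3.trans (F.mono h)
    · intro h
      exact csInf_le (hbdd t ht0) h
  -- measurability of the quantile function on (0,1)
  have hindm : Measurable ((Ioo (0:ℝ) 1).indicator q) := by
    apply measurable_of_Iic
    intro x
    by_cases hx : (0:ℝ) ≤ x
    · have hset : (Ioo (0:ℝ) 1).indicator q ⁻¹' Iic x = (Ioo 0 1 ∩ Iic (F x)) ∪ (Ioo (0:ℝ) 1)ᶜ := by
        ext t
        simp only [mem_preimage, mem_Iic, mem_union, mem_inter_iff, mem_compl_iff]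
        by_cases ht : t ∈ Ioo (0:ℝ) 1
        · rw [indicator_of_mem ht]
          simp [ht, hq_iff t x ht.1 ht.2]
        · rw [indicator_of_notMem ht]
          simp [ht, hx]
      rw [hset]
      exact (measurableSet_Ioo.inter measurableSet_Iic).union measurableSet_Ioo.compl
    · have hset : (Ioo (0:ℝ) 1).indicator q ⁻¹' Iic x = Ioo 0 1 ∩ Iic (F x) := by
        ext t
        simp only [mem_preimage, mem_Iic, mem_inter_iff]
        by_cases ht : t ∈ Ioo (0:ℝ) 1
        · rw [indicator_of_mem ht]
          simp [ht, hq_iff t x ht.1 ht.2]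
        · rw [indicator_of_notMem ht]
          simp [ht, hx]
      rw [hset]
      exact measurableSet_Ioo.inter measurableSet_Iic
  set R : Measure ℝ := volume.restrict (Ioo 0 1) with hR
  haveI hRfin : IsFiniteMeasure R := by
    constructor
    rw [hR, Measure.restrict_apply_univ, Real.volume_Ioo]
    exact ENNReal.ofReal_lt_top
  have haem : AEMeasurable q R := by
    refine hindm.aemeasurable.congr ?_
    filter_upwards [ae_restrict_mem measurableSet_Ioo] with t ht
    exact indicator_of_mem ht q
  -- the quantile transform: pushforward of Lebesgue on (0,1) is the law of Z
  have h_map : Measure.map q R = ν := by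
    haveI : IsFiniteMeasure (Measure.map q R) := by
      constructor
      rw [Measure.map_apply_of_aemeasurable haem MeasurableSet.univ]
      exact lt_of_le_of_lt (measure_mono (subset_univ _)) (measure_lt_top R univ)
    refine Measure.ext_of_Iic _ _ (fun x => ?_)
    rw [Measure.map_apply_of_aemeasurable haem measurableSet_Iic, hR,
      Measure.restrict_apply' measurableSet_Ioo]
    have hset : q ⁻¹' Iic x ∩ Ioo 0 1 = Iic (F x) ∩ Ioo 0 1 := by
      ext t
      simp only [mem_inter_iff, mem_preimage, mem_Iic, mem_Ioo, and_congr_left_iff, and_imp]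
      intro ht0 ht1
      exact hq_iff t x ht0 ht1
    have hFx0 : 0 ≤ F x := cdf_nonneg ν x
    have hFx1 : F x ≤ 1 := cdf_le_one ν x
    rw [hset, ← ofReal_cdf ν x]
    rcases lt_or_ge (F x) 1 with h1 | h1
    · have : Iic (F x) ∩ Ioo (0:ℝ) 1 = Ioc 0 (F x) := by
        ext t
        simp only [mem_inter_iff, mem_Iic, mem_Ioo, mem_Ioc]
        exact ⟨fun h => ⟨h.2.1, h.1⟩, fun h => ⟨h.2, h.1, lt_of_le_of_lt h.2 h1⟩⟩
      rw [this, Real.volume_Ioc, sub_zero]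
    · have hF1 : F x = 1 := le_antisymm hFx1 h1
      have : Iic (F x) ∩ Ioo (0:ℝ) 1 = Ioo 0 1 := by
        rw [hF1]
        ext t
        simp only [mem_inter_iff, mem_Iic, mem_Ioo]
        exact ⟨fun h => h.2, fun h => ⟨h.2.le, h⟩⟩
      rw [this, Real.volume_Ioo, hF1, sub_zero]
  -- integrability of the quantile function
  have h_int_q : Integrable q R := by
    have h1 : Integrable (fun x : ℝ => x) ν := by
      rw [hν]
      exact (integrable_map_measure aestronglyMeasurable_id hZm.aemeasurable).mpr hZ
    rw [← h_map] at h1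
    exact (integrable_map_measure aestronglyMeasurable_id haem).mp h1
  set f : ℝ → ℝ := fun t => max (η - q t) 0 with hfdef
  have h_int_f : Integrable f R := ((integrable_const η).sub h_int_q).pos_part
  -- the LHS equals the integral of f on (0,1)
  have hcont : Continuous fun x : ℝ => max (η - x) 0 :=
    ((continuous_const.sub continuous_id).max continuous_const)
  have hLHS : ∫ ω, max (η - Z ω) 0 ∂μ = ∫ t, f t ∂ R := by
    have e1 : ∫ ω, max (η - Z ω) 0 ∂μ = ∫ x, max (η - x) 0 ∂ν := by
      rw [hν, integral_map hZm.aemeasurable hcont.aestronglyMeasurable]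
    rw [e1, ← h_map, integral_map haem hcont.aestronglyMeasurable]
  have h_int_on : ∀ p ∈ Icc (0:ℝ) 1, IntegrableOn q (Ioc 0 p) volume := by
    intro p hp
    have h1 : IntegrableOn q (Ioo 0 p) volume :=
      h_int_q.mono_measure (Measure.restrict_mono (Ioo_subset_Ioo le_rfl hp.2) le_rfl)
    rwa [IntegrableOn, Measure.restrict_congr_set Ioo_ae_eq_Ioc] at h1
  have h_int_f_on : ∀ p ∈ Icc (0:ℝ) 1, IntegrableOn f (Ioc 0 p) volume := by
    intro p hp
    have h1 : IntegrableOn f (Ioo 0 p) volume :=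
      h_int_f.mono_measure (Measure.restrict_mono (Ioo_subset_Ioo le_rfl hp.2) le_rfl)
    rwa [IntegrableOn, Measure.restrict_congr_set Ioo_ae_eq_Ioc] at h1
  have h_int_c : ∀ p : ℝ, IntegrableOn (fun _ : ℝ => η) (Ioc 0 p) volume := by
    intro p
    refine (integrableOn_const_iff (by finiteness)).2 (Or.inr ?_)
    rw [Real.volume_Ioc]
    exact ENNReal.ofReal_lt_top
  have hlor : ∀ p, lorenzRV μ Z p = ∫ t in (0:ℝ)..p, q t := fun p => rfl
  have hg : ∀ p ∈ Icc (0:ℝ) 1, p * η - lorenzRV μ Z p = ∫ t in Ioc (0:ℝ) p, (η - q t) := by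
    intro p hp
    have hc : ∫ _ in Ioc (0:ℝ) p, (η:ℝ) = p * η := by
      rw [setIntegral_const, Measure.real, Real.volume_Ioc, sub_zero, ENNReal.toReal_ofReal hp.1, smul_eq_mul]
    rw [hlor p, intervalIntegral.integral_of_le hp.1,
      integral_sub (h_int_c p) (h_int_on p hp), hc]
  have hMR : ∫ t, f t ∂ R = ∫ t in Ioc (0:ℝ) 1, f t := by
    rw [hR, Measure.restrict_congr_set Ioo_ae_eq_Ioc]
  -- upper bound
  have h_ub : ∀ p ∈ Icc (0:ℝ) 1, p * η - lorenzRV μ Z p ≤ ∫ t in Ioc (0:ℝ) 1, f t := by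
    intro p hp
    rw [hg p hp]
    calc ∫ t in Ioc (0:ℝ) p, (η - q t) ≤ ∫ t in Ioc (0:ℝ) p, f t := by
          refine integral_mono ((h_int_c p).sub (h_int_on p hp)) (h_int_f_on p hp) ?_
          intro t
          exact le_max_left _ _
      _ ≤ ∫ t in Ioc (0:ℝ) 1, f t := by
          refine setIntegral_mono_set (h_int_f_on 1 ⟨zero_le_one, le_rfl⟩)
            (Eventually.of_forall fun t => le_max_right _ _)
            (HasSubset.Subset.eventuallyLE (Ioc_subset_Ioc_right hp.2))
  -- attainment at p₀ = F η
  set p₀ : ℝ := cdfRV μ Z η with hp₀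
  have hp₀F : p₀ = F η := hcdf η
  have hp₀mem : p₀ ∈ Icc (0:ℝ) 1 := by
    rw [hp₀F]
    exact ⟨cdf_nonneg ν η, cdf_le_one ν η⟩
  have hae1 : ∀ᵐ t : ℝ, t ≠ (1:ℝ) := by
    rw [ae_iff]
    have : {t : ℝ | ¬ t ≠ 1} = {(1:ℝ)} := by
      ext t; simp
    rw [this]
    exact Real.volume_singleton
  have h_attain : p₀ * η - lorenzRV μ Z p₀ = ∫ t in Ioc (0:ℝ) 1, f t := by
    have h1 : ∫ t in Ioc (0:ℝ) p₀, (η - q t) = ∫ t in Ioc (0:ℝ) p₀, f t := by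
      refine setIntegral_congr_ae measurableSet_Ioc ?_
      filter_upwards [hae1] with t ht1 ht
      have ht1' : t < 1 := lt_of_le_of_ne (ht.2.trans hp₀mem.2) ht1
      have hqt : q t ≤ η := (hq_iff t η ht.1 ht1').2 (le_of_le_of_eq ht.2 hp₀F)
      rw [hfdef]
      exact (max_eq_left (sub_nonneg.2 hqt)).symm
    have h2 : ∫ t in Ioc p₀ (1:ℝ), f t = 0 := by
      refine integral_eq_zero_of_ae ?_
      filter_upwards [ae_restrict_mem measurableSet_Ioc, ae_restrict_of_ae hae1] with t ht ht1
      have ht1' : t < 1 := lt_of_le_of_ne ht.2 ht1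
      have ht0 : 0 < t := lt_of_le_of_lt hp₀mem.1 ht.1
      have hqt : ¬ q t ≤ η := by
        rw [hq_iff t η ht0 ht1']
        rw [hp₀F] at ht
        exact not_le.2 ht.1
      rw [hfdef]
      simp only [Pi.zero_apply]
      exact max_eq_right (le_of_lt (sub_neg.2 (not_le.1 hqt)))
    have hsplit : ∫ t in Ioc (0:ℝ) 1, f t
        = (∫ t in Ioc (0:ℝ) p₀, f t) + ∫ t in Ioc p₀ (1:ℝ), f t := by
      rw [← Ioc_union_Ioc_eq_Ioc hp₀mem.1 hp₀mem.2]
      exact setIntegral_union (Ioc_disjoint_Ioc_of_le le_rfl) measurableSet_Ioc (h_int_f_on p₀ hp₀mem)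
        ((h_int_f_on 1 ⟨zero_le_one, le_rfl⟩).mono_set (Ioc_subset_Ioc_left hp₀mem.1))
    rw [hg p₀ hp₀mem, h1, hsplit, h2, add_zero]
  -- conclusion
  rw [hLHS, hMR]
  have hbddS : ∫ t in Ioc (0:ℝ) 1, f t ∈
      upperBounds ((fun p => p * η - lorenzRV μ Z p) '' Icc (0:ℝ) 1) := by
    rintro y ⟨p, hp, rfl⟩
    exact h_ub p hp
  refine le_antisymm (le_csSup ⟨_, hbddS⟩ ⟨p₀, hp₀mem, h_attain⟩) (csSup_le ?_ ?_)
  · exact (nonempty_Icc.2 zero_le_one).image _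
  · rintro y ⟨p, hp, rfl⟩
    exact h_ub p hp
end

section
/- Suppose for a sequence X = (X₁,…,X_T) of integrable random variables adapted to a filtration, and a benchmark sequence Y, the second-order stochastic dominance relation σ_{T−1}(ξ_{[T−1]}) + X_T | ξ_{[T−1]} ≽₍₂₎ Y_T | ξ_{[T−1]} holds conditionally for almost all histories ξ_{[T−1]}. Then for every t = 1,…,T−1 and almost every history ξ_{[t]}, the dynamic second-order dominance relation σ_t(ξ_{[t]}) + 𝐗_{t+1} | ξ_{[t]} ≽₍₂₎ 𝐘_{t+1} | ξ_{[t]} holds, where 𝐗_{t+1} | ξ_{[t]} denotes the projected future value obtained by nested conditional expectations of X_{t+1}, …, X_T given ξ_{[t]}. -/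
open MeasureTheory Filter Topology

/-- SSD of conditional shortfalls implies dominance of conditional means. -/
lemma ssd_mean_dominance {Ω : Type*} {m0 : MeasurableSpace Ω} (μ : Measure Ω)
    [IsProbabilityMeasure μ] {m : MeasurableSpace Ω} (hm : m ≤ m0)
    {U V : Ω → ℝ} (hU : Integrable U μ) (hV : Integrable V μ)
    (h : ∀ η : ℝ, μ[fun ω => max (η - U ω) 0|m] ≤ᵐ[μ] μ[fun ω => max (η - V ω) 0|m]) :
    μ[V|m] ≤ᵐ[μ] μ[U|m] := by
  -- shortfall decomposition
  have hid : ∀ (W : Ω → ℝ), Integrable W μ → ∀ η : ℝ, ∀ᵐ ω ∂μ,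
      (μ[fun ω => max (η - W ω) 0|m]) ω
        = η - (μ[W|m]) ω + (μ[fun ω => max (W ω - η) 0|m]) ω := by
    intro W hW η
    have e : (fun ω => max (η - W ω) 0)
        = ((fun _ => η) - W) + fun ω => max (W ω - η) 0 := by
      funext ω
      simp only [Pi.add_apply, Pi.sub_apply]
      rcases le_total (W ω) η with hle | hle
      · rw [max_eq_left (by linarith), max_eq_right (by linarith)]; ring
      · rw [max_eq_right (by linarith), max_eq_left (by linarith)]; ring
    rw [e]
    have h1 := condExp_add (μ := μ) (m := m) (f := (fun _ => η) - W)
      (g := fun ω => max (W ω - η) 0)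
      ((integrable_const η).sub hW) (by exact (hW.sub (integrable_const η)).pos_part)
    have h2 := condExp_sub (μ := μ) (m := m) (f := fun _ : Ω => η) (g := W)
      (integrable_const η) hW
    rw [condExp_const hm] at h2
    filter_upwards [h1, h2] with ω h1ω h2ω
    rw [h1ω]
    simp only [Pi.add_apply, Pi.sub_apply] at h2ω ⊢
    rw [h2ω]
  have key : ∀ n : ℕ, (fun ω => max ((μ[V|m]) ω - (μ[U|m]) ω) 0)
      ≤ᵐ[μ] μ[fun ω => max (V ω - (n : ℝ)) 0|m] := by
    intro n
    have hUn : 0 ≤ᵐ[μ] μ[fun ω => max (U ω - (n : ℝ)) 0|m] :=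
      condExp_nonneg (Eventually.of_forall fun ω => le_max_right _ _)
    have hVn : 0 ≤ᵐ[μ] μ[fun ω => max (V ω - (n : ℝ)) 0|m] :=
      condExp_nonneg (Eventually.of_forall fun ω => le_max_right _ _)
    filter_upwards [h n, hid U hU n, hid V hV n, hUn, hVn] with ω hω hUω hVω hU0 hV0
    rw [hUω, hVω] at hω
    simp only [Pi.zero_apply] at hU0 hV0
    exact max_le (by linarith) hV0
  set D : Ω → ℝ := fun ω => max ((μ[V|m]) ω - (μ[U|m]) ω) 0 with hD
  have hDint : Integrable D μ := by
    exact (integrable_condExp.sub integrable_condExp).pos_part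
  have hle_int : ∀ n : ℕ, ∫ ω, D ω ∂μ ≤ ∫ ω, max (V ω - (n : ℝ)) 0 ∂μ := by
    intro n
    refine le_trans (integral_mono_ae hDint integrable_condExp (key n)) (le_of_eq ?_)
    exact integral_condExp hm
  have hlim : Tendsto (fun n : ℕ => ∫ ω, max (V ω - (n : ℝ)) 0 ∂μ) atTop (𝓝 0) := by
    have := tendsto_integral_of_dominated_convergence (μ := μ)
      (F := fun (n : ℕ) ω => max (V ω - (n : ℝ)) 0) (f := fun _ => (0 : ℝ))
      (fun ω => |V ω|)
      (fun n => (by exact (hV.sub (integrable_const _)).pos_part : Integrable _ μ).1)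
      hV.abs
      (fun n => Eventually.of_forall fun ω => by
        rw [Real.norm_eq_abs, abs_of_nonneg (le_max_right _ _)]
        refine max_le ?_ (abs_nonneg _)
        have : (0 : ℝ) ≤ n := Nat.cast_nonneg n
        calc V ω - (n : ℝ) ≤ V ω := by linarith
        _ ≤ |V ω| := le_abs_self _)
      (Eventually.of_forall fun ω => by
        refine Tendsto.congr' ?_ tendsto_const_nhds
        filter_upwards [eventually_ge_atTop ⌈V ω⌉₊] with n hn
        rw [eq_comm, max_eq_right]
        have : V ω ≤ (n : ℝ) := le_trans (Nat.le_ceil _) (by exact_mod_cast hn)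
        linarith)
    simpa using this
  have hD0 : ∫ ω, D ω ∂μ = 0 := by
    refine le_antisymm (ge_of_tendsto' hlim hle_int) ?_
    exact integral_nonneg fun ω => le_max_right _ _
  have hDz : D =ᵐ[μ] 0 :=
    (integral_eq_zero_iff_of_nonneg (fun ω => le_max_right _ _) hDint).mp hD0
  filter_upwards [hDz] with ω hω
  have h1 : (μ[V|m]) ω - (μ[U|m]) ω ≤ D ω := le_max_left _ _
  rw [hω] at h1
  simpa using h1

/-- Theorem 1 of the paper (sequential SSD propagation): if the conditional
second-order stochastic dominance relation
`σ_{T-1} + X_T | ξ_{[T-1]} ≽₂ Y_T | ξ_{[T-1]}` holds (expressed via conditional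
expectations of shortfalls with respect to the σ-algebra `ℱ (T-1)`), then for
every stage `1 ≤ t ≤ T-1` the dynamic relation
`σ_t + 𝐗_{t+1}|ξ_{[t]} ≽₂ 𝐘_{t+1}|ξ_{[t]}` holds, where the projected future
value is `𝐗_{t+1}|ξ_{[t]} = X_{t+1} + ∑_{s=t+2}^{T} E[X_s | ℱ_{t+1}]`. -/
theorem sequential_ssd_propagation
    {Ω : Type*} {m0 : MeasurableSpace Ω} (μ : Measure Ω) [IsProbabilityMeasure μ]
    (T : ℕ) (hT : 2 ≤ T)
    (ℱ : ℕ → MeasurableSpace Ω) (hle : ∀ t, ℱ t ≤ m0) (hmono : Monotone ℱ)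
    (X Y : ℕ → Ω → ℝ)
    (hXint : ∀ t, Integrable (X t) μ) (hYint : ∀ t, Integrable (Y t) μ)
    (hXad : ∀ t, Measurable[ℱ t] (X t)) (hYad : ∀ t, Measurable[ℱ t] (Y t))
    (σ : ℕ → Ω → ℝ)
    (hσ : ∀ t ω, σ t ω = ∑ s ∈ Finset.Icc 1 t, (X s ω - Y s ω))
    (PX PY : ℕ → Ω → ℝ)
    (hPX : ∀ t ω, PX t ω =
      X (t + 1) ω + ∑ s ∈ Finset.Icc (t + 2) T, (μ[X s | ℱ (t + 1)]) ω)
    (hPY : ∀ t ω, PY t ω =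
      Y (t + 1) ω + ∑ s ∈ Finset.Icc (t + 2) T, (μ[Y s | ℱ (t + 1)]) ω)
    (hssd : ∀ η : ℝ,
      μ[fun ω => max (η - (σ (T - 1) ω + X T ω)) 0 | ℱ (T - 1)]
        ≤ᵐ[μ] μ[fun ω => max (η - Y T ω) 0 | ℱ (T - 1)]) :
    ∀ t, 1 ≤ t → t ≤ T - 1 → ∀ η : ℝ,
      μ[fun ω => max (η - (σ t ω + PX t ω)) 0 | ℱ t]
        ≤ᵐ[μ] μ[fun ω => max (η - PY t ω) 0 | ℱ t] := by
  have hσint : ∀ k, Integrable (σ k) μ := by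
    intro k
    rw [show σ k = fun ω => ∑ s ∈ Finset.Icc 1 k, (X s ω - Y s ω) from funext (hσ k)]
    exact integrable_finset_sum _ fun s _ => (hXint s).sub (hYint s)
  obtain ⟨T', rfl⟩ : ∃ T', T = T' + 1 := ⟨T - 1, by omega⟩
  simp only [Nat.add_sub_cancel] at hssd ⊢
  set T : ℕ := T' + 1 with hTdef
  have hT1 : T' + 1 = T := rfl
  -- decomposition of σ T
  have hσT : ∀ ω, σ T ω = σ T' ω + (X T ω - Y T ω) := by
    intro ω
    rw [hσ T ω, hσ T' ω]
    exact Finset.sum_Icc_succ_top (by omega) _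
  -- mean dominance at stage T-1
  have hUint : Integrable (fun ω => σ (T') ω + X T ω) μ :=
    (hσint (T')).add (hXint T)
  have hmean : μ[Y T|ℱ (T')] ≤ᵐ[μ] μ[fun ω => σ (T') ω + X T ω|ℱ (T')] :=
    ssd_mean_dominance μ (hle (T')) hUint (hYint T) hssd
  have hσTnn : 0 ≤ᵐ[μ] μ[σ T|ℱ (T')] := by
    have e : σ T = (fun ω => σ (T') ω + X T ω) - Y T := by
      funext ω
      simp only [Pi.sub_apply]
      rw [hσT ω]; ring
    have hsub := condExp_sub (μ := μ) (m := ℱ (T'))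
      (f := fun ω => σ (T') ω + X T ω) (g := Y T) hUint (hYint T)
    rw [← e] at hsub
    filter_upwards [hsub, hmean] with ω h1 h2
    rw [h1]
    simp only [Pi.sub_apply, Pi.zero_apply]
    linarith
  intro t ht1 ht2 η
  by_cases hcase : t = T'
  · -- last stage: exactly the hypothesis
    subst hcase
    have e1 : (fun ω => max (η - (σ t ω + PX t ω)) 0)
        = fun ω => max (η - (σ t ω + X T ω)) 0 := by
      funext ω
      rw [hPX t ω, Finset.Icc_eq_empty (by omega), Finset.sum_empty, add_zero, hT1]
    have e2 : (fun ω => max (η - PY t ω) 0)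
        = fun ω => max (η - Y T ω) 0 := by
      funext ω
      rw [hPY t ω, Finset.Icc_eq_empty (by omega), Finset.sum_empty, add_zero, hT1]
    rw [e1, e2]
    exact hssd η
  · have htlt : t + 1 ≤ T' := by omega
    -- nonnegativity propagates down via the tower property
    have h0 : 0 ≤ᵐ[μ] μ[σ T|ℱ (t + 1)] := by
      have htower := condExp_condExp_of_le (μ := μ) (f := σ T)
        (hmono htlt) (hle (T'))
      have : 0 ≤ᵐ[μ] μ[μ[σ T|ℱ (T')]|ℱ (t + 1)] := condExp_nonneg hσTnn
      filter_upwards [htower, this] with ω h1 h2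
      simp only [Pi.zero_apply] at h2 ⊢
      rw [← h1]; exact h2
    -- identify the conditional expectation with σ t + PX t - PY t
    have hsplitf : ∀ f : ℕ → ℝ, ∑ s ∈ Finset.Icc 1 T, f s
        = ∑ s ∈ Finset.Icc 1 (t + 1), f s + ∑ s ∈ Finset.Icc (t + 2) T, f s := by
      intro f
      simp only [← Finset.Ico_add_one_right_eq_Icc]
      rw [show t + 1 + 1 = t + 2 from rfl]
      exact (Finset.sum_Ico_consecutive f (by omega) (by omega)).symm
    have hσmeas : StronglyMeasurable[ℱ (t + 1)] (σ (t + 1)) := by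
      rw [show σ (t + 1) = fun ω => ∑ s ∈ Finset.Icc 1 (t + 1), (X s ω - Y s ω) from
        funext (hσ (t + 1))]
      refine (Finset.measurable_sum _ fun s hs => ?_).stronglyMeasurable
      have hs' : s ≤ t + 1 := (Finset.mem_Icc.mp hs).2
      exact ((hXad s).mono (hmono hs') le_rfl).sub ((hYad s).mono (hmono hs') le_rfl)
    have e : σ T = (σ (t + 1) + ∑ s ∈ Finset.Icc (t + 2) T, X s)
        - ∑ s ∈ Finset.Icc (t + 2) T, Y s := by
      funext ω
      simp only [Pi.sub_apply, Pi.add_apply, Finset.sum_apply]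
      rw [hσ T ω, hσ (t + 1) ω, hsplitf (fun s => X s ω - Y s ω)]
      simp only [Finset.sum_sub_distrib]
      ring
    have hSXint : Integrable (∑ s ∈ Finset.Icc (t + 2) T, X s) μ :=
      integrable_finset_sum' _ fun s _ => hXint s
    have hSYint : Integrable (∑ s ∈ Finset.Icc (t + 2) T, Y s) μ :=
      integrable_finset_sum' _ fun s _ => hYint s
    have h1 := condExp_sub (μ := μ) (m := ℱ (t + 1))
      (f := σ (t + 1) + ∑ s ∈ Finset.Icc (t + 2) T, X s)
      (g := ∑ s ∈ Finset.Icc (t + 2) T, Y s)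
      ((hσint (t + 1)).add hSXint) hSYint
    rw [← e] at h1
    have h2 := condExp_add (μ := μ) (m := ℱ (t + 1))
      (f := σ (t + 1)) (g := ∑ s ∈ Finset.Icc (t + 2) T, X s)
      (hσint (t + 1)) hSXint
    rw [condExp_of_stronglyMeasurable (hle (t + 1)) hσmeas (hσint (t + 1))] at h2
    have h3 := condExp_finset_sum (μ := μ) (m := ℱ (t + 1))
      (s := Finset.Icc (t + 2) T) (f := X) (fun s _ => hXint s)
    have h4 := condExp_finset_sum (μ := μ) (m := ℱ (t + 1))
      (s := Finset.Icc (t + 2) T) (f := Y) (fun s _ => hYint s)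
    have hcond : μ[σ T|ℱ (t + 1)] =ᵐ[μ] fun ω => σ t ω + PX t ω - PY t ω := by
      filter_upwards [h1, h2, h3, h4] with ω e1 e2 e3 e4
      rw [e1]
      simp only [Pi.sub_apply, Pi.add_apply] at e2 ⊢
      rw [e2, e3, e4]
      simp only [Finset.sum_apply]
      rw [hσ (t + 1) ω, Finset.sum_Icc_succ_top (by omega), ← hσ t ω,
        hPX t ω, hPY t ω]
      ring
    -- pointwise comparison of shortfalls
    have hpt : (fun ω => max (η - (σ t ω + PX t ω)) 0)
        ≤ᵐ[μ] fun ω => max (η - PY t ω) 0 := by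
      filter_upwards [hcond, h0] with ω h1ω h2ω
      simp only [Pi.zero_apply] at h2ω
      rw [h1ω] at h2ω
      exact max_le_max (by linarith) le_rfl
    have hPXint : Integrable (PX t) μ := by
      rw [show PX t = fun ω => X (t + 1) ω
          + ∑ s ∈ Finset.Icc (t + 2) T, (μ[X s|ℱ (t + 1)]) ω from funext (hPX t)]
      exact (hXint (t + 1)).add (integrable_finset_sum _ fun s _ => integrable_condExp)
    have hPYint : Integrable (PY t) μ := by
      rw [show PY t = fun ω => Y (t + 1) ω
          + ∑ s ∈ Finset.Icc (t + 2) T, (μ[Y s|ℱ (t + 1)]) ω from funext (hPY t)]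
      exact (hYint (t + 1)).add (integrable_finset_sum _ fun s _ => integrable_condExp)
    refine condExp_mono ?_ ?_ hpt
    · exact ((integrable_const η).sub ((hσint t).add hPXint)).pos_part
    · exact ((integrable_const η).sub hPYint).pos_part
end
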